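/- The Implicational Propositional Calculus is complete: if an IPC formula Z is a tautology, i.e. evaluates to true under every Boolean valuation of its propositional variables (where ⊃ is interpreted as the classical material conditional), then Z is a theorem of IPC. -/

import Mathlib

/-- IPC formulas: propositional variables and the conditional only. -/
inductive IPCForm : Type
  | var : ℕ → IPCForm
  | imp : IPCForm → IPCForm → IPCForm

infixr:60 (priority := high) " ⊃ " => IPCForm.imp

/-- Hilbert-style IPC derivability from a set of hypotheses. -/
inductive IPCDeriv : Set IPCForm → IPCForm → Prop
  | hyp {Γ : Set IPCForm} {A : IPCForm} : A ∈ Γ → IPCDeriv Γ A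
  | peirce {Γ : Set IPCForm} (A B : IPCForm) : IPCDeriv Γ (((A ⊃ B) ⊃ A) ⊃ A)
  | axK {Γ : Set IPCForm} (A B : IPCForm) : IPCDeriv Γ (A ⊃ (B ⊃ A))
  | axS {Γ : Set IPCForm} (A B C : IPCForm) :
      IPCDeriv Γ ((A ⊃ (B ⊃ C)) ⊃ ((A ⊃ B) ⊃ (A ⊃ C)))
  | mp {Γ : Set IPCForm} {A B : IPCForm} :
      IPCDeriv Γ (A ⊃ B) → IPCDeriv Γ A → IPCDeriv Γ B

/-- Disjunction defined within IPC: A ∨ B := (A ⊃ B) ⊃ B. -/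
def IPCForm.disj (A B : IPCForm) : IPCForm := (A ⊃ B) ⊃ B

/-- Multiple disjunction A₀ ∨ ⋯ ∨ A_N, associated to the left. -/
def IPCForm.bigDisj : (N : ℕ) → (Fin (N + 1) → IPCForm) → IPCForm
  | 0, A => A 0
  | N + 1, A => IPCForm.disj (IPCForm.bigDisj N (fun i => A i.castSucc)) (A (Fin.last (N + 1)))

/-- Boolean evaluation of IPC formulas under a valuation of the variables. -/
def IPCForm.eval (v : ℕ → Bool) : IPCForm → Bool
  | IPCForm.var n => v n
  | IPCForm.imp A B => !A.eval v || B.eval v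

/-! The target tautology `Z` plays the role of falsum. Relative to a formula `F`, a formula `A`
"holds" as `(F ⊃ A) ⊃ A` and "fails" as `A ⊃ F`. Kalmár's lemma then goes through in the
implicational fragment, Peirce's law doing the work of classical negation: under the hypotheses
fixing the signs of its variables, every formula is derivably true or false relative to `F`
according to its truth value. For the tautology `Z` relative to itself this yields `Z`, and the
hypotheses on the variables are discharged one at a time by a case split on their sign. -/

namespace IPCDeriv

variable {Γ Δ : Set IPCForm} {A B F : IPCForm}

theorem mono (h : IPCDeriv Γ A) (hΓΔ : Γ ⊆ Δ) : IPCDeriv Δ A := by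
  induction h with
  | hyp hA => exact hyp (hΓΔ hA)
  | peirce A B => exact peirce A B
  | axK A B => exact axK A B
  | axS A B C => exact axS A B C
  | mp _ _ ihAB ihA => exact mp ihAB ihA

theorem imp_self (A : IPCForm) : IPCDeriv Γ (A ⊃ A) :=
  mp (mp (axS A (A ⊃ A) A) (axK A (A ⊃ A))) (axK A A)

theorem imp_intro (h : IPCDeriv (insert A Γ) B) : IPCDeriv Γ (A ⊃ B) := by
  generalize hΔ : insert A Γ = Δ at h
  induction h with
  | @hyp C hC =>
    subst hΔ
    rcases hC with rfl | hC
    · exact imp_self C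
    · exact mp (axK C A) (hyp hC)
  | peirce C D => exact mp (axK _ A) (peirce C D)
  | axK C D => exact mp (axK _ A) (axK C D)
  | axS C D E => exact mp (axK _ A) (axS C D E)
  | mp _ _ ihCD ihC => exact mp (mp (axS A _ _) ihCD) ihC

end IPCDeriv

/-- `A.signed F true` and `A.signed F false` say that `A` holds, resp. fails, relative to the
falsum `F`; the former is the defined disjunction `F.disj A`. -/
def IPCForm.signed (A F : IPCForm) : Bool → IPCForm
  | true => (F ⊃ A) ⊃ A
  | false => A ⊃ F

namespace IPCDeriv

variable {Γ : Set IPCForm} {A B F : IPCForm}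

theorem signed_true_of_deriv (h : IPCDeriv Γ A) : IPCDeriv Γ (A.signed F true) :=
  mp (axK A (F ⊃ A)) h

theorem of_forall_signed_imp (h : ∀ b, IPCDeriv Γ (A.signed F b ⊃ F)) : IPCDeriv Γ F := by
  have hA : IPCDeriv Γ (A ⊃ F) :=
    imp_intro (mp ((h true).mono (Set.subset_insert _ _)) (signed_true_of_deriv (hyp (by simp))))
  exact mp (h false) hA

theorem signed_imp_of_signed_false (hA : IPCDeriv Γ (A.signed F false)) :
    IPCDeriv Γ ((A ⊃ B).signed F true) := by
  refine imp_intro (imp_intro ?_)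
  have hF : IPCDeriv (insert A (insert (F ⊃ A ⊃ B) Γ)) F :=
    mp (hA.mono (by intro _ _; simp_all)) (hyp (by simp))
  exact mp (mp (hyp (A := F ⊃ A ⊃ B) (by simp)) hF) (hyp (by simp))

theorem signed_imp_of_signed_true (hB : IPCDeriv Γ (B.signed F true)) :
    IPCDeriv Γ ((A ⊃ B).signed F true) := by
  refine imp_intro (imp_intro (mp (hB.mono (by intro _ _; simp_all)) (imp_intro ?_)))
  exact mp (mp (hyp (A := F ⊃ A ⊃ B) (by simp)) (hyp (by simp))) (hyp (by simp))

theorem signed_imp_of_signed_true_of_signed_false (hA : IPCDeriv Γ (A.signed F true))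
    (hB : IPCDeriv Γ (B.signed F false)) : IPCDeriv Γ ((A ⊃ B).signed F false) := by
  refine imp_intro (mp (peirce F A) (imp_intro ?_))
  have hA' : IPCDeriv (insert (F ⊃ A) (insert (A ⊃ B) Γ)) A :=
    mp (hA.mono (by intro _ _; simp_all)) (hyp (by simp))
  exact mp (hB.mono (by intro _ _; simp_all)) (mp (hyp (A := A ⊃ B) (by simp)) hA')

end IPCDeriv

def IPCForm.varBound : IPCForm → ℕ
  | var n => n + 1
  | imp A B => max A.varBound B.varBound

def IPCForm.literals (F : IPCForm) (v : ℕ → Bool) (M : ℕ) : Set IPCForm :=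
  (fun n => (var n).signed F (v n)) '' Set.Iio M

namespace IPCForm

theorem literals_mono (F : IPCForm) (v : ℕ → Bool) {M N : ℕ} (h : M ≤ N) :
    literals F v M ⊆ literals F v N :=
  Set.image_mono (Set.Iio_subset_Iio h)

@[simp]
theorem literals_zero (F : IPCForm) (v : ℕ → Bool) : literals F v 0 = ∅ := by
  simp [literals]

theorem literals_succ_update (F : IPCForm) (v : ℕ → Bool) (M : ℕ) (b : Bool) :
    literals F (Function.update v M b) (M + 1) = insert ((var M).signed F b) (literals F v M) := by
  rw [literals, Set.Iio_add_one_eq_Iic, ← Set.Iio_insert, Set.image_insert_eq,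
    Function.update_self]
  congr 1
  refine Set.image_congr fun n hn => ?_
  rw [Function.update_of_ne hn.ne]

end IPCForm

theorem IPCDeriv.kalmar (F : IPCForm) (v : ℕ → Bool) (A : IPCForm) :
    IPCDeriv (F.literals v A.varBound) (A.signed F (A.eval v)) := by
  induction A with
  | var n => exact hyp ⟨n, Nat.lt_succ_self n, rfl⟩
  | imp A B ihA ihB =>
    have hA := ihA.mono (F.literals_mono v (le_max_left A.varBound B.varBound))
    have hB := ihB.mono (F.literals_mono v (le_max_right A.varBound B.varBound))
    simp only [IPCForm.eval]
    cases hAv : A.eval v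
    · exact signed_imp_of_signed_false (hAv ▸ hA)
    cases hBv : B.eval v
    · exact signed_imp_of_signed_true_of_signed_false (hAv ▸ hA) (hBv ▸ hB)
    · exact signed_imp_of_signed_true (hBv ▸ hB)

theorem IPCDeriv.of_forall_literals {F : IPCForm} {M : ℕ}
    (h : ∀ v, IPCDeriv (F.literals v M) F) : IPCDeriv ∅ F := by
  induction M with
  | zero => simpa using h fun _ => true
  | succ M ih =>
    refine ih fun v => of_forall_signed_imp (A := .var M) fun b => imp_intro ?_
    rw [← F.literals_succ_update v M b]
    exact h _

/-- Completeness of the Implicational Propositional Calculus. -/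
theorem ipc_complete (Z : IPCForm)
    (htaut : ∀ v : ℕ → Bool, Z.eval v = true) :
    IPCDeriv ∅ Z := by
  refine IPCDeriv.of_forall_literals (M := Z.varBound) fun v => ?_
  have hZ := IPCDeriv.kalmar Z v Z
  rw [htaut v] at hZ
  exact .mp hZ (.imp_self Z)
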